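/- arXiv:1311.2242 — 2 statements merged into one kernel-verified Lean document; each statement's English description precedes it below -/
import Mathlib

section
/- Let p be an odd prime. Then W_p ≡ B_{2p−2} − B_{p−1} (mod p), i.e. the rational number W_p − (B_{2p−2} − B_{p−1}) equals p·(a/b) for some integers a, b with p ∤ b. -/
open Finset

/-- `x ≡ y (mod p^k)` for rationals: `x - y = p^k * (c/d)` with `p ∤ d`. -/
def ratCongr (p k : ℕ) (x y : ℚ) : Prop :=
  ∃ c d : ℤ, ¬ (p : ℤ) ∣ d ∧ x - y = (p : ℚ) ^ k * ((c : ℚ) / (d : ℚ))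

/-- The Wilson quotient `W_p = ((p-1)! + 1)/p` (an integer by Wilson's theorem). -/
def wilsonQuotient (p : ℕ) : ℤ := ((Nat.factorial (p - 1) : ℤ) + 1) / p

/-- The Fermat quotient `q_p(a) = (a^(p-1) - 1)/p` (an integer for `p ∤ a`). -/
def fermatQuotient (p a : ℕ) : ℤ := ((a : ℤ) ^ (p - 1) - 1) / p

/-- A prime `p` is a Wilson prime if `p ∣ W_p`. -/
def IsWilsonPrime (p : ℕ) : Prop := (p : ℤ) ∣ wilsonQuotient p

/-- A prime `p` is a Lerch prime if `∑_{a=1}^{p-1} q_p(a) ≡ W_p (mod p²)`. -/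
def IsLerchPrime (p : ℕ) : Prop :=
  (p : ℤ) ^ 2 ∣ (∑ a ∈ Icc 1 (p - 1), fermatQuotient p a) - wilsonQuotient p

/-- The harmonic number `H_a = ∑_{k=1}^{a} 1/k`. -/
def harmonicNum (a : ℕ) : ℚ := ∑ k ∈ Icc 1 a, (1 : ℚ) / k

/-- The generalized harmonic number `H_{a,2} = ∑_{k=1}^{a} 1/k²`. -/
def harmonicNum2 (a : ℕ) : ℚ := ∑ k ∈ Icc 1 a, (1 : ℚ) / (k : ℚ) ^ 2

/-!
Put `U_m = ∑_{k<p} k^m`. Faulhaber's formula writes `U_m - p B_m` as a sum of terms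
`B_i (m choose i) p^(m+1-i) / (m+1-i)` with `i < m`. Since `p B_i` is `p`-integral (by induction,
from the same formula), for `p ≥ 5` every term with `i ≤ m - 2` is divisible by `p²`, and the term
`i = m - 1` vanishes for `m = p - 1, 2p - 2` because `B_{m-1}` has odd index. Hence
`p (B_{2p-2} - B_{p-1}) ≡ U_{2p-2} - U_{p-1} (mod p²)`.

On the other side, with `x_a = a^(p-1) ≡ 1 (mod p)` for `0 < a < p`,
`U_{2p-2} - U_{p-1} = ∑ (x_a - 1)² + ∑ (x_a - 1) ≡ ∏ x_a - 1 (mod p²)`, and by Wilson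
`∏ x_a = ((p-1)!)^(p-1) = (1 - p W_p)^(p-1) ≡ 1 + p W_p (mod p²)`. Dividing by `p` gives the claim;
`p = 3` is checked by hand.
-/

theorem IsUltrametricDist.norm_sub_le_of_le {M : Type*} [SeminormedAddCommGroup M]
    [IsUltrametricDist M] {x y : M} {r : ℝ} (hx : ‖x‖ ≤ r) (hy : ‖y‖ ≤ r) : ‖x - y‖ ≤ r := by
  simpa [sub_eq_add_neg] using (norm_add_le_max x (-y)).trans (max_le hx (by rwa [norm_neg]))

theorem sum_range_pow_sub_mul_bernoulli {K : Type*} [Field K] [CharZero K] (n m : ℕ) :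
    ∑ k ∈ range n, (k : K) ^ m - n * bernoulli m =
      ∑ i ∈ range m, bernoulli i * m.choose i * (n : K) ^ (m + 1 - i) / (m + 1 - i : ℕ) := by
  have hℚ : ∑ k ∈ range n, (k : ℚ) ^ m - n * bernoulli m =
      ∑ i ∈ range m, bernoulli i * m.choose i * (n : ℚ) ^ (m + 1 - i) / (m + 1 - i : ℕ) := by
    rw [sum_range_pow, sum_range_succ, Nat.choose_succ_self_right, Nat.add_sub_cancel_left]
    have hm : (m : ℚ) + 1 ≠ 0 := by positivity
    rw [show bernoulli m * ((m + 1 : ℕ) : ℚ) * (n : ℚ) ^ 1 / (m + 1) = n * bernoulli m by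
      push_cast; field_simp, add_sub_cancel_right]
    refine sum_congr rfl fun i hi => ?_
    have hi : i < m := mem_range.mp hi
    have hj : ((m + 1 - i : ℕ) : ℚ) ≠ 0 := by exact_mod_cast (by omega : m + 1 - i ≠ 0)
    have hchoose : (m.choose i : ℚ) * (m + 1) = (m + 1).choose i * (m + 1 - i : ℕ) := by
      exact_mod_cast Nat.choose_mul_succ_eq m i
    rw [div_eq_div_iff hm hj]
    linear_combination (-(bernoulli i * (n : ℚ) ^ (m + 1 - i))) * hchoose
  simpa using congrArg (Rat.cast : ℚ → K) hℚ

theorem padicValNat_lt_self {p j : ℕ} [Fact p.Prime] (hj : j ≠ 0) : padicValNat p j < j :=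
  Nat.lt_pow_self (Fact.out : p.Prime).one_lt |>.trans_le <|
    Nat.le_of_dvd (Nat.pos_of_ne_zero hj) pow_padicValNat_dvd

theorem padicValNat_add_three_le {p j : ℕ} [Fact p.Prime] (hp5 : 5 ≤ p) (hj : 3 ≤ j) :
    padicValNat p j + 3 ≤ j := by
  set v := padicValNat p j
  have hpow : p ^ v ≤ j := Nat.le_of_dvd (by omega) pow_padicValNat_dvd
  have hbern : 1 + v * 4 ≤ 5 ^ v := by
    exact_mod_cast one_add_mul_le_pow (by norm_num : (-2 : ℤ) ≤ 4) v
  have := Nat.pow_le_pow_left hp5 v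
  omega

section Padic

variable {p : ℕ} [Fact p.Prime]

theorem norm_prime_pow_div_natCast_le {j t : ℕ} (hj : j ≠ 0) (h : padicValNat p j + t ≤ j) :
    ‖(p : ℚ_[p]) ^ j / j‖ ≤ (p : ℝ) ^ (-(t : ℤ)) := by
  have hp : (1 : ℝ) ≤ p := by exact_mod_cast (Fact.out : p.Prime).one_le
  rw [norm_div, Padic.norm_p_pow, Padic.norm_eq_zpow_neg_valuation (by exact_mod_cast hj),
    Padic.valuation_natCast, ← zpow_sub₀ (by positivity)]
  exact zpow_le_zpow_right₀ hp (by omega)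

theorem norm_mul_natCast_mul_prime_pow_div_le {B : ℚ_[p]} {c j t : ℕ} (hB : ‖B‖ ≤ p)
    (hj : j ≠ 0) (h : padicValNat p j + t ≤ j) :
    ‖B * c * (p : ℚ_[p]) ^ j / j‖ ≤ (p : ℝ) ^ (1 - t : ℤ) := by
  have hp : (0 : ℝ) < p := by exact_mod_cast (Fact.out : p.Prime).pos
  calc ‖B * c * (p : ℚ_[p]) ^ j / j‖ = ‖B‖ * ‖(c : ℚ_[p])‖ * ‖(p : ℚ_[p]) ^ j / j‖ := by
        rw [mul_div_assoc, norm_mul, norm_mul]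
    _ ≤ p * 1 * (p : ℝ) ^ (-(t : ℤ)) := by
        gcongr
        · exact IsUltrametricDist.norm_natCast_le_one ℚ_[p] c
        · exact norm_prime_pow_div_natCast_le hj h
    _ = (p : ℝ) ^ (1 - t : ℤ) := by rw [mul_one, sub_eq_add_neg, zpow_add₀ hp.ne', zpow_one]

theorem norm_bernoulli_le (m : ℕ) : ‖(bernoulli m : ℚ_[p])‖ ≤ p := by
  induction m using Nat.strong_induction_on with
  | _ m ih =>
  have hfaulhaber := sum_range_pow_sub_mul_bernoulli (K := ℚ_[p]) p m
  rw [sub_eq_iff_eq_add, ← sub_eq_iff_eq_add'] at hfaulhaber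
  have hpB : ‖(p : ℚ_[p]) * bernoulli m‖ ≤ 1 := by
    rw [← hfaulhaber]
    refine IsUltrametricDist.norm_sub_le_of_le
      (IsUltrametricDist.norm_sum_le_of_forall_le_of_nonneg zero_le_one fun k _ => ?_)
      (IsUltrametricDist.norm_sum_le_of_forall_le_of_nonneg zero_le_one fun i hi => ?_)
    · exact_mod_cast IsUltrametricDist.norm_natCast_le_one ℚ_[p] (k ^ m)
    · have hi : i < m := mem_range.mp hi
      simpa using norm_mul_natCast_mul_prime_pow_div_le (t := 1) (ih i hi) (by omega)
        (Nat.succ_le_of_lt (padicValNat_lt_self (by omega)))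
  rw [norm_mul, Padic.norm_p] at hpB
  have hp : (p : ℝ) ≠ 0 := by exact_mod_cast (Fact.out : p.Prime).ne_zero
  calc ‖(bernoulli m : ℚ_[p])‖ = p * ((p : ℝ)⁻¹ * ‖(bernoulli m : ℚ_[p])‖) := by field_simp
    _ ≤ p * 1 := by gcongr
    _ = p := mul_one _

theorem norm_sum_range_pow_sub_mul_bernoulli_le (hp5 : 5 ≤ p) {m : ℕ}
    (hm : bernoulli (m - 1) = 0) :
    ‖∑ k ∈ range p, (k : ℚ_[p]) ^ m - p * bernoulli m‖ ≤ (p : ℝ) ^ (-2 : ℤ) := by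
  rw [sum_range_pow_sub_mul_bernoulli]
  refine IsUltrametricDist.norm_sum_le_of_forall_le_of_nonneg (by positivity) fun i hi => ?_
  have hi : i < m := mem_range.mp hi
  -- the term `i = m - 1` is only `O(p⁻¹)`; all others are `O(p⁻²)`
  rcases eq_or_ne i (m - 1) with rfl | hne
  · simp [hm]
  · simpa using norm_mul_natCast_mul_prime_pow_div_le (t := 3) (norm_bernoulli_le i)
      (by omega) (padicValNat_add_three_le hp5 (by omega))

theorem ratCongr_of_norm_sub_le {k : ℕ} {x y : ℚ}
    (h : ‖((x - y : ℚ) : ℚ_[p])‖ ≤ (p : ℝ) ^ (-(k : ℤ))) : ratCongr p k x y := by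
  set r : ℚ := (x - y) / p ^ k
  have hr : ‖(r : ℚ_[p])‖ ≤ 1 := by
    rw [Rat.cast_div, norm_div, Rat.cast_pow, Rat.cast_natCast, Padic.norm_p_pow,
      div_le_one (zpow_pos (Nat.cast_pos.mpr (Fact.out : p.Prime).pos) _)]
    exact h
  have hden : ¬ (p : ℤ) ∣ r.den := by
    rw [← PadicInt.norm_int_lt_one_iff_dvd, not_lt]
    simpa using ((PadicInt.isUnit_iff).mp (PadicInt.isUnit_den r hr)).ge
  have hpk : (p : ℚ) ^ k ≠ 0 := pow_ne_zero _ (Nat.cast_ne_zero.mpr (Fact.out : p.Prime).ne_zero)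
  refine ⟨r.num, r.den, hden, ?_⟩
  rw [Int.cast_natCast, Rat.num_div_den, mul_div_cancel₀ _ hpk]

end Padic

theorem sq_dvd_prod_sub_one_sub_sum {R ι : Type*} [CommRing R] (s : Finset ι) {x : ι → R} {t : R}
    (h : ∀ i ∈ s, t ∣ x i - 1) : t ^ 2 ∣ ∏ i ∈ s, x i - 1 - ∑ i ∈ s, (x i - 1) := by
  classical
  induction s using Finset.induction_on with
  | empty => simp
  | insert a s ha ih =>
    rw [prod_insert ha, sum_insert ha]
    have hs : ∀ i ∈ s, t ∣ x i - 1 := fun i hi => h i (mem_insert_of_mem hi)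
    have key : x a * ∏ i ∈ s, x i - 1 - (x a - 1 + ∑ i ∈ s, (x i - 1)) =
        x a * (∏ i ∈ s, x i - 1 - ∑ i ∈ s, (x i - 1)) + (x a - 1) * ∑ i ∈ s, (x i - 1) := by ring
    rw [key]
    exact (dvd_mul_of_dvd_right (ih hs) _).add
      (sq t ▸ mul_dvd_mul (h a (mem_insert_self a s)) (dvd_sum hs))

theorem sq_dvd_one_add_pow_sub {R : Type*} [CommRing R] (t : R) (n : ℕ) :
    t ^ 2 ∣ (1 + t) ^ n - 1 - n * t := by
  simpa using sq_dvd_prod_sub_one_sub_sum (range n) (x := fun _ => 1 + t)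
    (fun _ _ => by simp)

theorem mul_wilsonQuotient {p : ℕ} [Fact p.Prime] :
    (p : ℤ) * wilsonQuotient p = (p - 1).factorial + 1 := by
  have h : ((((p - 1).factorial : ℤ) + 1 : ℤ) : ZMod p) = 0 := by
    push_cast
    rw [ZMod.wilsons_lemma, neg_add_cancel]
  exact Int.mul_ediv_cancel' ((ZMod.intCast_zmod_eq_zero_iff_dvd _ _).mp h)

theorem sq_dvd_sum_pow_sub_sum_pow_sub_mul_wilsonQuotient {p : ℕ} [hp : Fact p.Prime]
    (hodd : Odd p) :
    (p : ℤ) ^ 2 ∣ ∑ k ∈ range p, (k : ℤ) ^ (2 * p - 2) - ∑ k ∈ range p, (k : ℤ) ^ (p - 1) -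
      p * wilsonQuotient p := by
  set W := wilsonQuotient p
  obtain ⟨n, hn⟩ : ∃ n, p = n + 1 := ⟨p - 1, by have := hp.out.one_lt; omega⟩
  have hn_even : Even n := by rw [hn] at hodd; simpa [Nat.odd_add_one] using hodd
  have hn0 : n ≠ 0 := by have := hp.out.one_lt; omega
  let x (a : ℕ) : ℤ := ((a + 1 : ℕ) : ℤ) ^ n
  have hfermat : ∀ a ∈ range n, (p : ℤ) ∣ x a - 1 := fun a ha => by
    have := Nat.coprime_of_lt_prime a.succ_ne_zero (by rw [hn]; simpa using ha) hp.out
    simpa [x, hn] using Int.prime_dvd_pow_sub_one hp.out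
      (Nat.isCoprime_iff_coprime.mpr this.symm)
  have hsum : ∑ k ∈ range p, (k : ℤ) ^ (2 * p - 2) - ∑ k ∈ range p, (k : ℤ) ^ (p - 1) =
      ∑ a ∈ range n, (x a - 1) ^ 2 + ∑ a ∈ range n, (x a - 1) := by
    rw [hn, show 2 * (n + 1) - 2 = 2 * n by omega, Nat.add_sub_cancel, sum_range_succ',
      sum_range_succ']
    simp only [Nat.cast_zero, zero_pow (by omega : 2 * n ≠ 0), zero_pow hn0, add_zero,
      ← sum_add_distrib, ← sum_sub_distrib]
    exact sum_congr rfl fun a _ => by ring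
  have hprod : ∏ a ∈ range n, x a = (1 + -(p * W)) ^ n := by
    have hwilson := mul_wilsonQuotient (p := p)
    rw [show p - 1 = n by omega] at hwilson
    rw [prod_pow, ← Nat.cast_prod, prod_range_add_one_eq_factorial, ← hn_even.neg_pow]
    congr 1
    linarith
  have key : ∑ k ∈ range p, (k : ℤ) ^ (2 * p - 2) - ∑ k ∈ range p, (k : ℤ) ^ (p - 1) - p * W =
      ∑ a ∈ range n, (x a - 1) ^ 2 - (∏ a ∈ range n, x a - 1 - ∑ a ∈ range n, (x a - 1)) +
      ((1 + -(p * W)) ^ n - 1 - n * -(p * W)) - p ^ 2 * W := by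
    rw [hsum, hprod, hn]
    push_cast
    ring
  rw [key]
  refine (((dvd_sum fun a ha => pow_dvd_pow_of_dvd (hfermat a ha) 2).sub
    (sq_dvd_prod_sub_one_sub_sum _ hfermat)).add ?_).sub (dvd_mul_right _ _)
  exact (pow_dvd_pow_of_dvd (dvd_neg.mpr (dvd_mul_right _ _)) 2).trans
    (sq_dvd_one_add_pow_sub _ n)

theorem norm_prime_mul_wilsonQuotient_sub_bernoulli_le {p : ℕ} [Fact p.Prime] (hodd : Odd p)
    (hp5 : 5 ≤ p) :
    ‖(p : ℚ_[p]) * (wilsonQuotient p - (bernoulli (2 * p - 2) - bernoulli (p - 1)))‖ ≤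
      (p : ℝ) ^ (-2 : ℤ) := by
  obtain ⟨k, rfl⟩ := hodd
  have hB := norm_sum_range_pow_sub_mul_bernoulli_le hp5 (m := 2 * k + 1 - 1)
    (bernoulli_eq_zero_of_odd ⟨k - 1, by omega⟩ (by omega))
  have hB' := norm_sum_range_pow_sub_mul_bernoulli_le hp5 (m := 2 * (2 * k + 1) - 2)
    (bernoulli_eq_zero_of_odd ⟨2 * k - 1, by omega⟩ (by omega))
  have hW := (Padic.norm_int_le_pow_iff_dvd _ 2).mpr
    (by exact_mod_cast sq_dvd_sum_pow_sub_sum_pow_sub_mul_wilsonQuotient ⟨k, rfl⟩)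
  refine le_of_eq_of_le ?_ (IsUltrametricDist.norm_sub_le_of_le
    (IsUltrametricDist.norm_sub_le_of_le hB' hB) (by exact_mod_cast hW))
  congr 1
  push_cast
  ring

theorem stmt_4 (p : ℕ) (hp : p.Prime) (hodd : Odd p) :
    ratCongr p 1 ((wilsonQuotient p : ℚ))
      (bernoulli (2 * p - 2) - bernoulli (p - 1)) := by
  have : Fact p.Prime := ⟨hp⟩
  obtain rfl | hp5 : p = 3 ∨ 5 ≤ p := by
    obtain ⟨k, rfl⟩ := hodd
    have := hp.two_le
    rcases k with _ | _ | k <;> omega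
  · refine ⟨2, 5, by decide, ?_⟩
    have hW : wilsonQuotient 3 = 1 := by decide
    norm_num [hW, bernoulli_eq_bernoulli'_of_ne_one, bernoulli'_four, bernoulli'_two]
  · refine ratCongr_of_norm_sub_le ?_
    rw [Nat.cast_one, zpow_neg_one]
    have h := norm_prime_mul_wilsonQuotient_sub_bernoulli_le hodd hp5
    have hp0 : (0 : ℝ) < p := by exact_mod_cast hp.pos
    rw [norm_mul, Padic.norm_p, show (-2 : ℤ) = -1 + -1 by rfl, zpow_add₀ hp0.ne', zpow_neg_one,
      mul_le_mul_iff_of_pos_left (inv_pos.mpr hp0)] at h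
    exact_mod_cast h
end

section
/- Let p be a prime with p > 3. Then p is a Lerch prime if and only if W_p ≡ B_{p−1} − 1 + 1/p (mod p²) as rational numbers. -/
open Finset

/-!
With `S = ∑_{k<p} k^(p-1)` we have `p · ∑ q_p(a) = S - (p - 1)`, so the differences
`∑ q_p(a) - W_p` and `W_p - (B_{p-1} - 1 + 1/p)` add up to `(S - p B_{p-1}) / p`, in which
`W_p` no longer occurs. Faulhaber's formula writes `S - p B_{p-1}` as
`∑_{i ≤ p-3} B_i C(p,i) p^(p-1-i)` (the term `i = p - 2` vanishes as `B_{p-2} = 0`), and every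
term is divisible by `p³` since `B_i` is `p`-integral for `i < p - 1`. So the sum of the two
differences is `0 mod p²`, and by the ultrametric inequality one of them is `0 mod p²` iff the
other is.
-/

section padicNorm

variable {p : ℕ} [Fact p.Prime]

theorem padicNorm_le_one_iff_exists_eq_div {z : ℚ} :
    padicNorm p z ≤ 1 ↔ ∃ c d : ℤ, ¬ (p : ℤ) ∣ d ∧ z = c / d := by
  constructor
  · intro hz
    refine ⟨z.num, z.den, fun hden => ?_, z.num_div_den.symm⟩
    have hnum : ¬ (p : ℤ) ∣ z.num := fun hnum =>
      Nat.not_coprime_of_dvd_of_dvd (Fact.out : p.Prime).one_lt (Int.natCast_dvd.mp hnum)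
        (Int.natCast_dvd_natCast.mp hden) z.reduced
    have hlt : padicNorm p (z.den : ℤ) < 1 := (padicNorm.int_lt_one_iff _).2 hden
    have hpos : 0 < padicNorm p (z.den : ℤ) :=
      (padicNorm.nonneg _).lt_of_ne' (padicNorm.nonzero (by exact_mod_cast z.den_nz))
    rw [← z.num_div_den, padicNorm.div, (padicNorm.int_eq_one_iff _).2 hnum, ← Int.cast_natCast,
      div_le_one hpos] at hz
    linarith
  · rintro ⟨c, d, hd, rfl⟩
    rw [padicNorm.div, (padicNorm.int_eq_one_iff _).2 hd, div_one]
    exact padicNorm.of_int c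

theorem padicNorm_le_iff_of_padicNorm_add_le {x y : ℚ} {r : ℚ} (h : padicNorm p (x + y) ≤ r) :
    padicNorm p x ≤ r ↔ padicNorm p y ≤ r := by
  constructor
  · intro hx
    simpa using padicNorm.sub (q := x + y) (r := x) |>.trans (max_le h hx)
  · intro hy
    simpa using padicNorm.sub (q := x + y) (r := y) |>.trans (max_le h hy)

theorem padicNorm_natCast_pow (k : ℕ) :
    padicNorm p ((p : ℚ) ^ k) = (p : ℚ) ^ (-(k : ℤ)) := by
  rw [IsAbsoluteValue.abv_pow (padicNorm p), padicNorm.padicNorm_p_of_prime, zpow_neg,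
    zpow_natCast, inv_pow]

theorem ratCongr_iff_padicNorm_sub_le {k : ℕ} {x y : ℚ} :
    ratCongr p k x y ↔ padicNorm p (x - y) ≤ (p : ℚ) ^ (-(k : ℤ)) := by
  have hpk : (p : ℚ) ^ k ≠ 0 := pow_ne_zero _ (Nat.cast_ne_zero.2 (Fact.out : p.Prime).ne_zero)
  have hpk' : (0 : ℚ) < (p : ℚ) ^ (-(k : ℤ)) :=
    zpow_pos (Nat.cast_pos.2 (Fact.out : p.Prime).pos) _
  rw [← div_le_one hpk', ← padicNorm_natCast_pow, ← padicNorm.div,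
    padicNorm_le_one_iff_exists_eq_div]
  simp only [ratCongr, div_eq_iff hpk, mul_comm]

end padicNorm

theorem natCast_mul_fermatQuotient {p a : ℕ} (hp : p.Prime) (ha : ¬ p ∣ a) :
    (p : ℤ) * fermatQuotient p a = (a : ℤ) ^ (p - 1) - 1 := by
  have hcop : IsCoprime (a : ℤ) p :=
    Nat.isCoprime_iff_coprime.2 (Nat.coprime_comm.1 ((hp.coprime_iff_not_dvd).2 ha))
  exact Int.mul_ediv_cancel' (Int.ModEq.pow_card_sub_one_eq_one hp hcop).symm.dvd

theorem natCast_mul_sum_fermatQuotient {p : ℕ} (hp : p.Prime) :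
    (p : ℚ) * ∑ a ∈ Icc 1 (p - 1), (fermatQuotient p a : ℚ) =
      ∑ k ∈ range p, (k : ℚ) ^ (p - 1) - (p - 1) := by
  have hterm :
      ∀ a ∈ Icc 1 (p - 1), (p : ℚ) * fermatQuotient p a = (a : ℚ) ^ (p - 1) - 1 := by
    intro a ha
    have ha' := mem_Icc.1 ha
    exact_mod_cast natCast_mul_fermatQuotient hp (Nat.not_dvd_of_pos_of_lt ha'.1 (by omega))
  obtain ⟨n, rfl⟩ : ∃ n, p = n + 1 := ⟨p - 1, by have := hp.one_lt; omega⟩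
  rw [mul_sum, sum_congr rfl hterm, sum_sub_distrib, Nat.range_succ_eq_Icc_zero,
    Icc_eq_cons_Ioc n.zero_le, sum_cons, ← Icc_add_one_left_eq_Ioc]
  have hn : n ≠ 0 := by rintro rfl; exact Nat.not_prime_one hp
  simp [hn]

theorem padicNorm_bernoulli_le_one {p : ℕ} [Fact p.Prime] {m : ℕ} (hm : m + 1 < p) :
    padicNorm p (bernoulli m) ≤ 1 := by
  induction m using Nat.strong_induction_on with
  | _ m ih =>
    have hunit : padicNorm p ((m + 1 : ℕ) : ℚ) = 1 :=
      (padicNorm.nat_eq_one_iff _).2 (Nat.not_dvd_of_pos_of_lt m.succ_pos hm)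
    have hrec : ((m + 1 : ℕ) : ℚ) * bernoulli m = (if m + 1 = 1 then 1 else 0) -
        ∑ k ∈ range m, ((m + 1).choose k : ℚ) * bernoulli k := by
      rw [← sum_bernoulli (m + 1), sum_range_succ, Nat.choose_succ_self_right]
      ring
    have hnorm := congrArg (padicNorm p) hrec
    rw [padicNorm.mul, hunit, one_mul] at hnorm
    rw [hnorm]
    refine padicNorm.sub.trans (max_le ?_ ?_)
    · split_ifs <;> simp
    · refine padicNorm.sum_le' (fun k hk => ?_) zero_le_one
      have hk := mem_range.1 hk
      rw [padicNorm.mul]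
      exact mul_le_one₀ (padicNorm.of_nat _) (padicNorm.nonneg _) (ih k hk (by omega))

theorem sum_range_pow_sub_mul_bernoulli_s8 {p : ℕ} (hodd : Odd p) (hp3 : 3 < p) :
    ∑ k ∈ range p, (k : ℚ) ^ (p - 1) - p * bernoulli (p - 1) =
      ∑ i ∈ range (p - 2), bernoulli i * ((p.choose i * p ^ (p - 1 - i) : ℕ) : ℚ) := by
  obtain ⟨m, rfl⟩ : ∃ m, p = m + 3 := ⟨p - 3, by omega⟩
  have hodd' : Odd (m + 1) := by
    obtain ⟨t, ht⟩ := hodd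
    exact ⟨t - 1, by omega⟩
  have hp0 : ((m + 3 : ℕ) : ℚ) ≠ 0 := by positivity
  rw [show m + 3 - 1 = m + 2 from rfl, show m + 3 - 2 = m + 1 from rfl, sum_range_pow,
    sum_range_succ, sum_range_succ, bernoulli_eq_zero_of_odd hodd' (by omega)]
  have hcast : ((m + 2 : ℕ) : ℚ) + 1 = ((m + 3 : ℕ) : ℚ) := by push_cast; ring
  have htop : bernoulli (m + 2) * ((m + 2 + 1).choose (m + 2) : ℕ) *
      ((m + 3 : ℕ) : ℚ) ^ (m + 2 + 1 - (m + 2)) / ((m + 3 : ℕ) : ℚ) =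
        ((m + 3 : ℕ) : ℚ) * bernoulli (m + 2) := by
    rw [Nat.choose_succ_self_right, show m + 2 + 1 - (m + 2) = 1 by omega]
    field_simp
  rw [hcast, htop, zero_mul, zero_mul, zero_div, add_zero, add_sub_cancel_right]
  refine sum_congr rfl fun i hi => ?_
  rw [show m + 2 + 1 - i = (m + 2 - i) + 1 by have := mem_range.1 hi; omega, pow_succ]
  push_cast
  field_simp

theorem pow_three_dvd_choose_mul_pow {p i : ℕ} (hp : p.Prime) (hp3 : 3 < p) (hi : i + 3 ≤ p) :
    p ^ 3 ∣ p.choose i * p ^ (p - 1 - i) := by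
  rcases Nat.eq_zero_or_pos i with rfl | hi0
  · simpa using Nat.pow_dvd_pow p (by omega : 3 ≤ p - 1)
  · rw [show p ^ 3 = p * p ^ 2 by ring]
    exact mul_dvd_mul (hp.dvd_choose_self hi0.ne' (by omega)) (Nat.pow_dvd_pow p (by omega))

theorem padicNorm_sum_range_pow_sub_le {p : ℕ} [Fact p.Prime] (hp3 : 3 < p) :
    padicNorm p (∑ k ∈ range p, (k : ℚ) ^ (p - 1) - p * bernoulli (p - 1)) ≤
      (p : ℚ) ^ (-3 : ℤ) := by
  have hp : p.Prime := Fact.out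
  rw [sum_range_pow_sub_mul_bernoulli_s8 (hp.odd_of_ne_two (by omega)) hp3]
  refine padicNorm.sum_le' (fun i hi => ?_) (by positivity)
  have hi := mem_range.1 hi
  have hdvd : ((p ^ 3 : ℕ) : ℤ) ∣ ((p.choose i * p ^ (p - 1 - i) : ℕ) : ℤ) :=
    Int.natCast_dvd_natCast.2 (pow_three_dvd_choose_mul_pow hp hp3 (by omega))
  have hnat := padicNorm.dvd_iff_norm_le.1 hdvd
  rw [Int.cast_natCast] at hnat
  rw [padicNorm.mul, ← one_mul ((p : ℚ) ^ (-3 : ℤ))]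
  exact mul_le_mul (padicNorm_bernoulli_le_one (by omega)) hnat (padicNorm.nonneg _) zero_le_one


theorem stmt_8 (p : ℕ) (hp : p.Prime) (hp3 : 3 < p) :
    IsLerchPrime p ↔
      ratCongr p 2 ((wilsonQuotient p : ℚ))
        (bernoulli (p - 1) - 1 + 1 / (p : ℚ)) := by
  have := Fact.mk hp
  set Q := ∑ a ∈ Icc 1 (p - 1), fermatQuotient p a
  set W := wilsonQuotient p
  set B := bernoulli (p - 1)
  have hp0 : (p : ℚ) ≠ 0 := Nat.cast_ne_zero.2 hp.ne_zero
  have hsplit : ((Q - W : ℤ) : ℚ) + (W - (B - 1 + 1 / p)) =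
      (∑ k ∈ range p, (k : ℚ) ^ (p - 1) - p * B) / p := by
    have hQ : (p : ℚ) * Q = ∑ k ∈ range p, (k : ℚ) ^ (p - 1) - (p - 1) := by
      push_cast [Q]
      exact natCast_mul_sum_fermatQuotient hp
    push_cast
    field_simp
    linear_combination hQ
  have hbound :
      padicNorm p (((Q - W : ℤ) : ℚ) + (W - (B - 1 + 1 / p))) ≤ (p : ℚ) ^ (-2 : ℤ) := by
    rw [hsplit, padicNorm.div, padicNorm.padicNorm_p_of_prime, div_inv_eq_mul]
    calc _ ≤ (p : ℚ) ^ (-3 : ℤ) * p :=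
          mul_le_mul_of_nonneg_right (padicNorm_sum_range_pow_sub_le hp3) (Nat.cast_nonneg p)
      _ = (p : ℚ) ^ (-2 : ℤ) := by rw [← zpow_add_one₀ hp0]; norm_num
  rw [IsLerchPrime, ratCongr_iff_padicNorm_sub_le, Nat.cast_ofNat,
    ← padicNorm_le_iff_of_padicNorm_add_le hbound]
  exact_mod_cast padicNorm.dvd_iff_norm_le (n := 2)
end
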